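/- arXiv:0706.1065 — 4 statements merged into one kernel-verified Lean document; each statement's English description precedes it below -/
import Mathlib

section
/- Let V be a finite-dimensional nonzero vector space over an algebraically closed field F, and let A, A* be linear endomorphisms of V such that no proper nonzero subspace of V is invariant under both A and A*. Then the identity map is the unique F-algebra automorphism of End(V) that fixes both A and A*. -/
/-!
`A` and `A*` generate a subalgebra `S` of `End(V)` over which `V` is a simple module. Burnside's
theorem gives `S = End(V)`, and an algebra automorphism fixing the generators of `S` fixes `S`
pointwise.
-/

open Module

section

variable {F V : Type*} [Field F] [AddCommGroup V] [Module F V]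

theorem isSimpleModule_adjoin_of_invariant [Nontrivial V] {s : Set (End F V)}
    (hirr : ∀ W : Submodule F V, (∀ a ∈ s, ∀ v ∈ W, a v ∈ W) → W = ⊥ ∨ W = ⊤) :
    IsSimpleModule (Algebra.adjoin F s) V where
  eq_bot_or_eq_top p := by
    have hinv : ∀ a ∈ s, ∀ v ∈ p.restrictScalars F, a v ∈ p.restrictScalars F :=
      fun a ha v hv => p.smul_mem ⟨a, Algebra.subset_adjoin ha⟩ hv
    simpa only [Submodule.restrictScalars_eq_bot_iff, Submodule.restrictScalars_eq_top_iff]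
      using hirr _ hinv

variable [IsAlgClosed F] [FiniteDimensional F V]

/-- Burnside's theorem. -/
theorem Subalgebra.eq_top_of_isSimpleModule (S : Subalgebra F (End F V)) [IsSimpleModule S V] :
    S = ⊤ := by
  classical
  refine Algebra.eq_top_iff.mpr fun X => ?_
  -- By Schur's lemma `End S V` consists of scalars, so `X` commutes with it and the Jacobson
  -- density theorem applies to `X`.
  have hscalar := (IsSimpleModule.algebraMap_end_bijective_of_isAlgClosed (A := S) (V := V) F).2
  let X' : End (End S V) V :=
    { X with
      map_smul' := fun g v => by
        obtain ⟨c, rfl⟩ := hscalar g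
        exact X.map_smul c v }
  obtain ⟨r, hr⟩ := jacobson_density X' (Finset.univ.image (Module.finBasis F V))
  have hrX : (r : End F V) = X :=
    (Module.finBasis F V).ext fun i => (hr _ (Finset.mem_image_of_mem _ (Finset.mem_univ i))).symm
  exact hrX ▸ r.2

end

theorem stmt_2 {F V : Type*} [Field F] [IsAlgClosed F] [AddCommGroup V] [Module F V]
    [FiniteDimensional F V] [Nontrivial V]
    (A Astar : Module.End F V)
    (hirr : ∀ W : Submodule F V, (∀ v ∈ W, A v ∈ W) → (∀ v ∈ W, Astar v ∈ W) →
      W = ⊥ ∨ W = ⊤)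
    (φ : Module.End F V ≃ₐ[F] Module.End F V)
    (hA : φ A = A) (hAstar : φ Astar = Astar) :
    ∀ X : Module.End F V, φ X = X := by
  have : IsSimpleModule (Algebra.adjoin F {A, Astar}) V :=
    isSimpleModule_adjoin_of_invariant fun W hW => hirr W (hW A (by simp)) (hW Astar (by simp))
  have hfix : Set.EqOn φ.toAlgHom (AlgHom.id F _) {A, Astar} := by
    rintro X (rfl | rfl)
    exacts [hA, hAstar]
  exact AlgHom.congr_fun (AlgHom.ext_of_adjoin_eq_top
    (Subalgebra.eq_top_of_isSimpleModule _) hfix)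
end

section
/- Let V be a finite-dimensional nonzero vector space over an algebraically closed field F, and let A, A* be linear endomorphisms of V admitting no common proper nonzero invariant subspace. Suppose ⟨·,·⟩ is a nondegenerate bilinear form on V satisfying ⟨Au,v⟩ = ⟨u,Av⟩ and ⟨A*u,v⟩ = ⟨u,A*v⟩ for all u,v ∈ V. Then any bilinear form ⟨·,·⟩' on V satisfying the same two symmetry conditions is a scalar multiple of ⟨·,·⟩. -/
theorem stmt_3 {F V : Type*} [Field F] [IsAlgClosed F] [AddCommGroup V] [Module F V]
    [FiniteDimensional F V] [Nontrivial V]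
    (A Astar : Module.End F V)
    (hirr : ∀ W : Submodule F V, (∀ v ∈ W, A v ∈ W) → (∀ v ∈ W, Astar v ∈ W) →
      W = ⊥ ∨ W = ⊤)
    (B B' : V →ₗ[F] V →ₗ[F] F)
    (hnd : ∀ v : V, (∀ w : V, B v w = 0) → v = 0)
    (hBA : ∀ u v : V, B (A u) v = B u (A v))
    (hBAs : ∀ u v : V, B (Astar u) v = B u (Astar v))
    (hB'A : ∀ u v : V, B' (A u) v = B' u (A v))
    (hB'As : ∀ u v : V, B' (Astar u) v = B' u (Astar v)) :
    ∃ c : F, B' = c • B := by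
  -- B as a map to the dual is injective
  have hinj : Function.Injective B := by
    intro u v huv
    have h0 : ∀ w, B (u - v) w = 0 := by
      intro w; simp [map_sub, huv]
    exact sub_eq_zero.mp (hnd _ h0)
  let e : V ≃ₗ[F] Module.Dual F V :=
    LinearMap.linearEquivOfInjective B hinj Subspace.dual_finrank_eq.symm
  -- S := B⁻¹ ∘ B'
  let S : Module.End F V := (e.symm : Module.Dual F V →ₗ[F] V) ∘ₗ B'
  have hS : ∀ v : V, B (S v) = B' v := by
    intro v
    show e (e.symm (B' v)) = B' v
    exact e.apply_symm_apply _
  -- S commutes with A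
  have hSA : ∀ v : V, S (A v) = A (S v) := by
    intro v
    apply hinj
    ext w
    calc B (S (A v)) w = B' (A v) w := by rw [hS]
      _ = B' v (A w) := hB'A v w
      _ = B (S v) (A w) := by rw [hS]
      _ = B (A (S v)) w := (hBA (S v) w).symm
  have hSAs : ∀ v : V, S (Astar v) = Astar (S v) := by
    intro v
    apply hinj
    ext w
    calc B (S (Astar v)) w = B' (Astar v) w := by rw [hS]
      _ = B' v (Astar w) := hB'As v w
      _ = B (S v) (Astar w) := by rw [hS]
      _ = B (Astar (S v)) w := (hBAs (S v) w).symm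
  -- S has an eigenvalue c
  obtain ⟨c, hc⟩ := Module.End.exists_eigenvalue S
  obtain ⟨v, hv⟩ := hc.exists_hasEigenvector
  -- eigenspace is A, Astar invariant
  have heig : Module.End.eigenspace S c = ⊤ := by
    have h1 : ∀ u ∈ Module.End.eigenspace S c, A u ∈ Module.End.eigenspace S c := by
      intro u hu
      rw [Module.End.mem_eigenspace_iff] at hu ⊢
      rw [hSA, hu, map_smul]
    have h2 : ∀ u ∈ Module.End.eigenspace S c, Astar u ∈ Module.End.eigenspace S c := by
      intro u hu
      rw [Module.End.mem_eigenspace_iff] at hu ⊢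
      rw [hSAs, hu, map_smul]
    rcases hirr (Module.End.eigenspace S c) h1 h2 with h | h
    · have hv1 : v ∈ Module.End.eigenspace S c := hv.1
      rw [h, Submodule.mem_bot] at hv1
      exact absurd hv1 hv.2
    · exact h
  refine ⟨c, ?_⟩
  ext u w
  have hu : S u = c • u := by
    have hmem : u ∈ Module.End.eigenspace S c := by rw [heig]; trivial
    exact Module.End.mem_eigenspace_iff.mp hmem
  calc B' u w = B (S u) w := by rw [hS]
    _ = c * B u w := by rw [hu, map_smul]; simp
    _ = (c • B) u w := by simp
end

section
/- Let V be a finite-dimensional vector space over a field F, let A : V → V be diagonalizable with eigenspaces V_0, ..., V_d (d ≥ 2) listed so that A*V_i ⊆ V_{i-1} + V_i + V_{i+1} for a linear map A* : V → V, and suppose additionally that no proper nonzero subspace of V is invariant under both A and A*. If {V_{σ(i)}}_{i=0}^d is another standard ordering of the eigenspaces (i.e., A*V_{σ(i)} ⊆ V_{σ(i-1)} + V_{σ(i)} + V_{σ(i+1)} for a permutation σ of {0,...,d}), then σ is either the identity or the reversal i ↦ d - i. -/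
/-!
Let `E₀, …, E_d` be the eigenspaces of `A`. Irreducibility forces `A*` to map `E_k` onto a nonzero
`E_{k+1}`-component for every `k < d`: otherwise `E₀ + ⋯ + E_k` would be a proper nonzero subspace
invariant under `A` and `A*` (by the modular law and independence of the eigenspaces). A second
standard ordering `E_{σ i}` therefore places `σ⁻¹ k` and `σ⁻¹ (k + 1)` at distance at most one, so
`σ⁻¹` is `1`-Lipschitz on `{0, …, d}`. The preimages of `0` and `d` are then at distance `≥ d`,
hence are the two endpoints, and the Lipschitz bounds from both ends leave only the identity and
the reversal.
-/

/-- Extend a finite sequence of subspaces, indexed by `Fin (d+1)`, to a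
`ℤ`-indexed sequence that is `⊥` outside the range `0,…,d`.  This encodes
the boundary convention `V₋₁ = 0`, `V_{d+1} = 0`. -/
def extOrd {F V : Type*} [Field F] [AddCommGroup V] [Module F V] {d : ℕ}
    (E : Fin (d + 1) → Submodule F V) : ℤ → Submodule F V :=
  fun i => if h : 0 ≤ i ∧ i < (d : ℤ) + 1 then E ⟨i.toNat, by omega⟩ else ⊥

theorem Fin.abs_sub_le_of_abs_succ_sub_le_one {n : ℕ} {g : Fin (n + 1) → ℤ}
    (h : ∀ k : Fin n, |g k.succ - g k.castSucc| ≤ 1) {i j : Fin (n + 1)} (hij : i ≤ j) :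
    |g j - g i| ≤ (j : ℤ) - i := by
  induction j using Fin.induction with
  | zero => simp [Fin.le_zero_iff.mp hij]
  | succ k ih =>
    rcases hij.eq_or_lt with rfl | hlt
    · simp
    calc |g k.succ - g i| ≤ |g k.succ - g k.castSucc| + |g k.castSucc - g i| := abs_sub_le _ _ _
      _ ≤ 1 + ((k.castSucc : ℤ) - i) := add_le_add (h k) (ih (Fin.le_castSucc_iff.mpr hlt))
      _ = (k.succ : ℤ) - i := by simp; ring

theorem Equiv.Perm.eq_refl_or_eq_revPerm_of_abs_sub_le_one {n : ℕ} (τ : Equiv.Perm (Fin (n + 1)))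
    (h : ∀ k : Fin n, |(τ k.succ : ℤ) - τ k.castSucc| ≤ 1) :
    τ = Equiv.refl _ ∨ τ = Fin.revPerm := by
  have hlip {i j : Fin (n + 1)} (hij : i ≤ j) :
      -((j : ℤ) - i) ≤ (τ j : ℤ) - τ i ∧ (τ j : ℤ) - τ i ≤ (j : ℤ) - i :=
    abs_le.mp (Fin.abs_sub_le_of_abs_succ_sub_le_one (g := fun k => (τ k : ℤ)) h hij)
  have hend : ((τ 0 : ℕ) = 0 ∧ (τ (Fin.last n) : ℕ) = n) ∨
      ((τ 0 : ℕ) = n ∧ (τ (Fin.last n) : ℕ) = 0) := by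
    rcases le_total (τ.symm 0) (τ.symm (Fin.last n)) with hab | hba
    · have := hlip hab
      simp only [Equiv.apply_symm_apply, Fin.val_zero, Fin.val_last, Nat.cast_zero] at this
      have ha : τ.symm 0 = 0 := Fin.ext (by simp only [Fin.val_zero]; omega)
      have hb : τ.symm (Fin.last n) = Fin.last n := Fin.ext (by simp only [Fin.val_last]; omega)
      rw [Equiv.symm_apply_eq] at ha hb
      simp [← ha, ← hb]
    · have := hlip hba
      simp only [Equiv.apply_symm_apply, Fin.val_zero, Fin.val_last, Nat.cast_zero] at this
      have ha : τ.symm 0 = Fin.last n := Fin.ext (by simp only [Fin.val_last]; omega)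
      have hb : τ.symm (Fin.last n) = 0 := Fin.ext (by simp only [Fin.val_zero]; omega)
      rw [Equiv.symm_apply_eq] at ha hb
      simp [← ha, ← hb]
  refine hend.imp (fun hend => ?_) (fun hend => ?_) <;> ext k
  all_goals
    have h1 := hlip (Fin.zero_le k)
    have h2 := hlip (Fin.le_last k)
    simp only [Fin.val_zero, Fin.val_last, Nat.cast_zero] at h1 h2
    simp only [Equiv.refl_apply, Fin.revPerm_apply, Fin.val_rev]
    omega

section StandardOrdering

variable {F V : Type*} [Field F] [AddCommGroup V] [Module F V] {d : ℕ}

theorem extOrd_natCast (G : Fin (d + 1) → Submodule F V) (k : Fin (d + 1)) :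
    extOrd G (k : ℤ) = G k := by
  rw [extOrd, dif_pos ⟨by positivity, by omega⟩]
  congr

theorem extOrd_le_iSup (G : Fin (d + 1) → Submodule F V) (m : ℤ) :
    extOrd G m ≤ ⨆ l : Fin (d + 1), ⨆ _ : (l : ℤ) = m, G l := by
  rw [extOrd]
  split_ifs with h
  · exact le_iSup₂_of_le ⟨m.toNat, by omega⟩ (by simp; omega) le_rfl
  · exact bot_le

def IsStandardOrdering (B : Module.End F V) (E : Fin (d + 1) → Submodule F V) : Prop :=
  ∀ k, (E k).map B ≤ ⨆ l : Fin (d + 1), ⨆ _ : |(l : ℤ) - k| ≤ 1, E l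

theorem IsStandardOrdering.of_extOrd {B : Module.End F V} {E : Fin (d + 1) → Submodule F V}
    (h : ∀ i : ℤ, ∀ v ∈ extOrd E i, B v ∈ extOrd E (i - 1) ⊔ extOrd E i ⊔ extOrd E (i + 1)) :
    IsStandardOrdering B E := by
  intro k
  rintro _ ⟨v, hv, rfl⟩
  have hBv := h k v ((extOrd_natCast E k).symm ▸ hv)
  refine SetLike.le_def.mp (sup_le (sup_le ?_ ?_) ?_) hBv <;>
  refine (extOrd_le_iSup E _).trans (iSup₂_mono' fun l hl => ⟨l, ?_, le_rfl⟩) <;>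
  rw [abs_le] <;> omega

theorem IsStandardOrdering.not_map_castSucc_le {A B : Module.End F V}
    {E : Fin (d + 1) → Submodule F V} (hB : IsStandardOrdering B E) (hind : iSupIndep E)
    (hnz : ∀ i, E i ≠ ⊥) (hA : ∀ i, (E i).map A ≤ E i)
    (hirr : ∀ W : Submodule F V, (∀ v ∈ W, A v ∈ W) → (∀ v ∈ W, B v ∈ W) → W = ⊥ ∨ W = ⊤)
    (k : Fin d) : ¬ (E k.castSucc).map B ≤ ⨆ l, ⨆ _ : l ≠ k.succ, E l := by
  intro hk
  set W := ⨆ l, ⨆ _ : l ≤ k.castSucc, E l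
  set Y := ⨆ l, ⨆ _ : l ≠ k.succ, E l
  have hWY : W ≤ Y :=
    iSup₂_mono' fun l hl => ⟨l, (hl.trans_lt Fin.castSucc_lt_succ).ne, le_rfl⟩
  have hBW : ∀ l ≤ k.castSucc, (E l).map B ≤ W := by
    intro l hl
    have hl' : (l : ℕ) ≤ k := hl
    have hleft : (E l).map B ≤ W ⊔ E k.succ := by
      refine (hB l).trans (iSup₂_le fun m hm => ?_)
      rw [abs_le] at hm
      by_cases hmk : (m : ℕ) ≤ k
      · exact le_sup_of_le_left (le_iSup₂_of_le m hmk le_rfl)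
      · obtain rfl : m = k.succ := Fin.ext (by simp only [Fin.val_succ]; omega)
        exact le_sup_right
    have hright : (E l).map B ≤ Y := by
      rcases hl.eq_or_lt with rfl | hlt
      · exact hk
      have hlt' : (l : ℕ) < k := hlt
      refine (hB l).trans (iSup₂_le fun m hm => le_iSup₂_of_le m ?_ le_rfl)
      rw [abs_le] at hm
      rw [ne_eq, Fin.ext_iff, Fin.val_succ]
      omega
    -- modular law: `(W ⊔ E (k + 1)) ⊓ Y = W ⊔ (E (k + 1) ⊓ Y) = W`
    calc (E l).map B ≤ (W ⊔ E k.succ) ⊓ Y := le_inf hleft hright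
      _ = W := by rw [sup_inf_assoc_of_le _ hWY, (hind k.succ).eq_bot, sup_bot_eq]
  have hAW : ∀ v ∈ W, A v ∈ W := iSup₂_le fun l hl =>
    Submodule.map_le_iff_le_comap.mp ((hA l).trans (le_iSup₂_of_le l hl le_rfl))
  have hBW' : ∀ v ∈ W, B v ∈ W := iSup₂_le fun l hl =>
    Submodule.map_le_iff_le_comap.mp (hBW l hl)
  rcases hirr W hAW hBW' with hbot | htop
  · exact hnz 0 (eq_bot_iff.mpr (hbot ▸ le_iSup₂_of_le 0 (Fin.zero_le _) le_rfl))
  · exact hnz k.succ ((hind k.succ).eq_bot_of_le (le_top.trans (htop ▸ hWY)))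

theorem IsStandardOrdering.abs_symm_sub_le_one {B : Module.End F V}
    {E : Fin (d + 1) → Submodule F V} {σ : Equiv.Perm (Fin (d + 1))}
    (hσ : IsStandardOrdering B fun l => E (σ l)) {i j : Fin (d + 1)}
    (hij : ¬ (E i).map B ≤ ⨆ l, ⨆ _ : l ≠ j, E l) :
    |(σ.symm j : ℤ) - σ.symm i| ≤ 1 := by
  by_contra hfar
  apply hij
  have hi := hσ (σ.symm i)
  simp only [Equiv.apply_symm_apply] at hi
  refine hi.trans (iSup₂_le fun l hl => le_iSup₂_of_le (σ l) ?_ le_rfl)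
  rintro rfl
  rw [Equiv.symm_apply_apply] at hfar
  exact hfar (abs_sub_comm (l : ℤ) _ ▸ hl)

end StandardOrdering

theorem stmt_7_general {F V : Type*} [Field F] [AddCommGroup V] [Module F V]
    (A Astar : Module.End F V) (d : ℕ)
    (θ : Fin (d + 1) → F) (hθ : Function.Injective θ)
    (E : Fin (d + 1) → Submodule F V)
    (heig : ∀ i, E i = Module.End.eigenspace A (θ i))
    (hnz : ∀ i, E i ≠ ⊥)
    (hstd : ∀ i : ℤ, ∀ v ∈ extOrd E i,
      Astar v ∈ extOrd E (i - 1) ⊔ extOrd E i ⊔ extOrd E (i + 1))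
    (hirr : ∀ W : Submodule F V, (∀ v ∈ W, A v ∈ W) → (∀ v ∈ W, Astar v ∈ W) →
      W = ⊥ ∨ W = ⊤)
    (σ : Equiv.Perm (Fin (d + 1)))
    (hstdσ : ∀ i : ℤ, ∀ v ∈ extOrd (fun j => E (σ j)) i,
      Astar v ∈ extOrd (fun j => E (σ j)) (i - 1) ⊔ extOrd (fun j => E (σ j)) i ⊔
        extOrd (fun j => E (σ j)) (i + 1)) :
    σ = Equiv.refl (Fin (d + 1)) ∨ σ = Fin.revPerm := by
  have hind : iSupIndep E := by
    rw [show E = _ from funext heig]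
    exact (Module.End.eigenspaces_iSupIndep A).comp hθ
  have hA (i) : (E i).map A ≤ E i := by
    rw [heig]
    rintro _ ⟨v, hv, rfl⟩
    rw [Module.End.mem_eigenspace_iff.mp hv]
    exact Submodule.smul_mem _ _ hv
  have hsteps (k : Fin d) : |(σ.symm k.succ : ℤ) - σ.symm k.castSucc| ≤ 1 :=
    (IsStandardOrdering.of_extOrd hstdσ).abs_symm_sub_le_one
      ((IsStandardOrdering.of_extOrd hstd).not_map_castSucc_le hind hnz hA hirr k)
  rcases Equiv.Perm.eq_refl_or_eq_revPerm_of_abs_sub_le_one σ.symm hsteps with h | h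
  · exact Or.inl (by simpa using congrArg Equiv.symm h)
  · exact Or.inr (by simpa using congrArg Equiv.symm h)

theorem stmt_7 {F V : Type*} [Field F] [AddCommGroup V] [Module F V]
    [FiniteDimensional F V]
    (A Astar : Module.End F V) (d : ℕ) (hd : 2 ≤ d)
    (θ : Fin (d + 1) → F) (hθ : Function.Injective θ)
    (E : Fin (d + 1) → Submodule F V)
    (heig : ∀ i, E i = Module.End.eigenspace A (θ i))
    (hnz : ∀ i, E i ≠ ⊥)
    (hdiag : (⨆ i, E i) = ⊤)
    (hstd : ∀ i : ℤ, ∀ v ∈ extOrd E i,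
      Astar v ∈ extOrd E (i - 1) ⊔ extOrd E i ⊔ extOrd E (i + 1))
    (hirr : ∀ W : Submodule F V, (∀ v ∈ W, A v ∈ W) → (∀ v ∈ W, Astar v ∈ W) →
      W = ⊥ ∨ W = ⊤)
    (σ : Equiv.Perm (Fin (d + 1)))
    (hstdσ : ∀ i : ℤ, ∀ v ∈ extOrd (fun j => E (σ j)) i,
      Astar v ∈ extOrd (fun j => E (σ j)) (i - 1) ⊔ extOrd (fun j => E (σ j)) i ⊔
        extOrd (fun j => E (σ j)) (i + 1)) :
    σ = Equiv.refl (Fin (d + 1)) ∨ σ = Fin.revPerm :=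
  stmt_7_general A Astar d θ hθ E heig hnz hstd hirr σ hstdσ
end

section
/- Let V be a finite-dimensional nonzero vector space over an algebraically closed field F, and let A, A* be linear endomorphisms of V with no common proper nonzero invariant subspace. Suppose there exists an antiautomorphism † of End(V) with A† = A and (A*)† = A*. Then the pair (A, A*) on V is isomorphic to the pair (Ã, Ã*) on the dual space Ṽ, where à and Ã* are the dual (transpose) maps of A and A*: there exists a vector space isomorphism γ : V → Ṽ with γA = Ãγ and γA* = Ã*γ. -/
/-!
Transposing the antiautomorphism `†` gives an algebra homomorphism `X ↦ (X†)~` from `End V` to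
`End Ṽ`, i.e. makes `Ṽ` a module over `End V`. For a functional `f` and `w ∈ Ṽ` the map
`v ↦ (f ⊗ v)†~ w`, where `(f ⊗ v) u = f u • v`, intertwines this action with the natural action
on `V`; choosing `f`, `v`, `w` so that it is nonzero, its kernel is invariant under `A` and `A*`,
hence zero, and comparing dimensions it is an isomorphism. Since `A† = A` and `(A*)† = A*`, it
intertwines `A` with `Ã` and `A*` with `Ã*`.
-/

open Module LinearMap

section Intertwiner

variable {F V W : Type*} [Field F] [AddCommGroup V] [Module F V] [AddCommGroup W] [Module F W]

def rankOneIntertwiner (σ : End F V →ₗ[F] End F W) (f : Dual F V) (w : W) : V →ₗ[F] W :=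
  applyₗ w ∘ₗ σ ∘ₗ smulRightₗ f

theorem rankOneIntertwiner_apply (σ : End F V →ₗ[F] End F W) (f : Dual F V) (w : W) (v : V) :
    rankOneIntertwiner σ f w v = σ (f.smulRight v) w :=
  rfl

theorem smulRight_apply_eq_mul (f : Dual F V) (X : End F V) (v : V) :
    f.smulRight (X v) = X * f.smulRight v := by
  ext
  simp

theorem rankOneIntertwiner_map_apply {σ : End F V →ₗ[F] End F W}
    (hσ : ∀ X Y, σ (X * Y) = σ X * σ Y) (f : Dual F V) (w : W) (X : End F V) (v : V) :
    rankOneIntertwiner σ f w (X v) = σ X (rankOneIntertwiner σ f w v) := by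
  rw [rankOneIntertwiner_apply, smulRight_apply_eq_mul, hσ, End.mul_apply]
  rfl

theorem exists_intertwiner_ne_zero [Nontrivial V] {σ : End F V →ₗ[F] End F W}
    (hσ : ∀ X Y, σ (X * Y) = σ X * σ Y) (hinj : Function.Injective σ) :
    ∃ γ : V →ₗ[F] W, γ ≠ 0 ∧ ∀ (X : End F V) (v : V), γ (X v) = σ X (γ v) := by
  obtain ⟨v, hv⟩ := exists_ne (0 : V)
  obtain ⟨f, hf⟩ := Projective.exists_dual_eq_one F hv
  have hfv : f.smulRight v ≠ 0 := fun h => hv <| by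
    simpa [hf] using congr($h v)
  obtain ⟨w, hw⟩ : ∃ w, σ (f.smulRight v) w ≠ 0 := by
    by_contra! h
    exact hfv (hinj (by rw [map_zero]; exact LinearMap.ext h))
  exact ⟨rankOneIntertwiner σ f w, fun h => hw congr($h v),
    rankOneIntertwiner_map_apply hσ f w⟩

end Intertwiner

theorem LinearMap.injective_of_intertwines {R V W : Type*} [Ring R] [AddCommGroup V]
    [Module R V] [AddCommGroup W] [Module R W] {A B : End R V} {A' B' : End R W}
    (hirr : ∀ U : Submodule R V, (∀ v ∈ U, A v ∈ U) → (∀ v ∈ U, B v ∈ U) → U = ⊥ ∨ U = ⊤)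
    {γ : V →ₗ[R] W} (hγ : γ ≠ 0) (hA : ∀ v, γ (A v) = A' (γ v)) (hB : ∀ v, γ (B v) = B' (γ v)) :
    Function.Injective γ := by
  rw [← ker_eq_bot]
  refine (hirr (ker γ) (fun v hv => ?_) (fun v hv => ?_)).resolve_right fun h => hγ ?_
  · rw [mem_ker] at hv ⊢; rw [hA, hv, map_zero]
  · rw [mem_ker] at hv ⊢; rw [hB, hv, map_zero]
  · exact ker_eq_top.mp h

theorem Module.Dual.transpose_injective {F V : Type*} [Field F] [AddCommGroup V] [Module F V]
    [FiniteDimensional F V] :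
    Function.Injective (Dual.transpose : End F V →ₗ[F] Dual F V →ₗ[F] Dual F V) :=
  fun _ _ h => (dualMap_dualMap_eq_iff F V).mp congr(dualMap $h)

theorem Module.Dual.transpose_comp_mul_of_antimul {F V : Type*} [Field F] [AddCommGroup V]
    [Module F V] {ρ : End F V →ₗ[F] End F V} (hanti : ∀ X Y, ρ (X * Y) = ρ Y * ρ X)
    (X Y : End F V) :
    (Dual.transpose ∘ₗ ρ) (X * Y) = (Dual.transpose ∘ₗ ρ) X * (Dual.transpose ∘ₗ ρ) Y := by
  simp only [comp_apply, hanti, ← dualMap_def]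
  exact (dualMap_comp_dualMap _ _).symm

theorem stmt_9_general {F V : Type*} [Field F] [AddCommGroup V] [Module F V]
    [FiniteDimensional F V] [Nontrivial V]
    (A Astar : Module.End F V)
    (hirr : ∀ W : Submodule F V, (∀ v ∈ W, A v ∈ W) → (∀ v ∈ W, Astar v ∈ W) →
      W = ⊥ ∨ W = ⊤)
    (ρ : Module.End F V →ₗ[F] Module.End F V)
    (hbij : Function.Bijective ρ)
    (hanti : ∀ X Y : Module.End F V, ρ (X * Y) = ρ Y * ρ X)
    (hA : ρ A = A) (hAstar : ρ Astar = Astar) :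
    ∃ γ : V ≃ₗ[F] Module.Dual F V,
      (∀ v : V, γ (A v) = A.dualMap (γ v)) ∧
      (∀ v : V, γ (Astar v) = Astar.dualMap (γ v)) := by
  obtain ⟨γ, hγ, hγX⟩ := exists_intertwiner_ne_zero (Dual.transpose_comp_mul_of_antimul hanti)
    (Dual.transpose_injective.comp hbij.injective)
  have hγA : ∀ v, γ (A v) = A.dualMap (γ v) := fun v => by simpa [hA, dualMap_def] using hγX A v
  have hγAstar : ∀ v, γ (Astar v) = Astar.dualMap (γ v) := fun v => by
    simpa [hAstar, dualMap_def] using hγX Astar v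
  exact ⟨γ.linearEquivOfInjective (injective_of_intertwines hirr hγ hγA hγAstar)
    (Subspace.dual_finrank_eq).symm, hγA, hγAstar⟩

theorem stmt_9 {F V : Type*} [Field F] [IsAlgClosed F] [AddCommGroup V] [Module F V]
    [FiniteDimensional F V] [Nontrivial V]
    (A Astar : Module.End F V)
    (hirr : ∀ W : Submodule F V, (∀ v ∈ W, A v ∈ W) → (∀ v ∈ W, Astar v ∈ W) →
      W = ⊥ ∨ W = ⊤)
    (ρ : Module.End F V →ₗ[F] Module.End F V)
    (hbij : Function.Bijective ρ)
    (hanti : ∀ X Y : Module.End F V, ρ (X * Y) = ρ Y * ρ X)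
    (hA : ρ A = A) (hAstar : ρ Astar = Astar) :
    ∃ γ : V ≃ₗ[F] Module.Dual F V,
      (∀ v : V, γ (A v) = A.dualMap (γ v)) ∧
      (∀ v : V, γ (Astar v) = Astar.dualMap (γ v)) :=
  stmt_9_general A Astar hirr ρ hbij hanti hA hAstar
end
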